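/- arXiv:math/0302233 — 9 statements merged into one kernel-verified Lean document; each statement's English description precedes it below -/
import Mathlib

section
/- Let X be a noetherian separated scheme and A = Γ(X, O_X) its ring of global sections. Then every prime ideal of A of height at most 1 lies in the image of the canonical morphism X → Spec A. In particular the canonical morphism hits all primes of height 0 and all primes of height 1. -/
/-!
Suppose `p` is not in the image. The ring `A = Γ(X, ⊤)` embeds into the noetherian ring
`∏ Γ(X, Uᵢ)` for a finite affine cover, so it has finitely many minimal primes; since `p` has
height at most one, prime avoidance yields `f ∈ p` such that `p` is minimal over `(f)`.
On each affine `U`, no prime of `Γ(X, U)` lies over `p`, so `f` becomes a unit after inverting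
`A ∖ p`: some `s ∉ p` is divisible by `f` on `U`. Multiplying over the cover, one `s ∉ p` has
`D(s) ⊆ D(f)` on `X`, and the qcqs lemma `Γ(X, D(s)) = A_s` gives `f ∣ sⁿ`, so `s ∈ p`.
-/

open AlgebraicGeometry CategoryTheory

universe u

section CommRing

variable {A : Type*} [CommRing A]

lemma minimalPrimes.finite_of_injective {B : Type*} [CommRing B] [IsNoetherianRing B]
    {ρ : A →+* B} (hρ : Function.Injective ρ) : (minimalPrimes A).Finite :=
  ((minimalPrimes.finite_of_isNoetherianRing B).image (Ideal.comap ρ)).subset fun _ hw ↦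
    Ideal.minimalPrimes_comap_subset ρ ⊥ (by rwa [Ideal.comap_bot_of_injective ρ hρ])

lemma PrimeSpectrum.exists_mem_minimalPrimes_span_singleton (hfin : (minimalPrimes A).Finite)
    (p : PrimeSpectrum A) (hp : Order.height p ≤ 1) :
    ∃ f, p.asIdeal ∈ (Ideal.span {f}).minimalPrimes := by
  let W := {w ∈ minimalPrimes A | w ≠ p.asIdeal}
  have hW : ¬ (p.asIdeal : Set A) ⊆ ⋃ w ∈ W, w := by
    rw [Ideal.subset_union_prime_finite (hfin.subset (Set.sep_subset _ _)) ⊥ ⊥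
      fun w hw _ _ ↦ hw.1.isPrime]
    rintro ⟨w, ⟨hw, hne⟩, hpw⟩
    exact hne (le_antisymm (hw.2 ⟨p.isPrime, bot_le⟩ hpw) hpw)
  obtain ⟨f, hfp, hf⟩ := Set.not_subset.mp hW
  refine ⟨f, ⟨p.isPrime, (Ideal.span_singleton_le_iff_mem _).mpr hfp⟩,
    fun w ⟨hw, hfw⟩ hwp ↦ ?_⟩
  by_contra hpw
  have hlt : (⟨w, hw⟩ : PrimeSpectrum A) < p := lt_of_le_not_ge hwp hpw
  have hmin : w ∈ minimalPrimes A := by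
    have := (Order.height_strictMono hlt ((Order.height_mono hlt.le).trans_lt
      (hp.trans_lt ENat.one_lt_top))).trans_le hp
    exact PrimeSpectrum.isMin_iff.mp (Order.height_eq_zero.mp (Order.lt_one_iff.mp this))
  exact hf (Set.mem_biUnion ⟨hmin, ne_of_lt hlt⟩ (hfw (Ideal.mem_span_singleton_self f)))

lemma Ideal.exists_notMem_map_dvd_map {R : Type*} [CommRing R] (ρ : A →+* R) {p : Ideal A}
    [p.IsPrime] {f : A} (hf : p ∈ (Ideal.span {f}).minimalPrimes)
    (hp : ∀ Q : Ideal R, Q.IsPrime → Q.comap ρ ≠ p) : ∃ s ∉ p, ρ f ∣ ρ s := by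
  by_contra! h
  have hdisj : Disjoint ((Ideal.span {ρ f} : Ideal R) : Set R) (p.primeCompl.map ρ) :=
    Ideal.disjoint_map_primeCompl_iff_comap_le.mpr fun s hs ↦
      not_not.mp fun hsp ↦ h s hsp (Ideal.mem_span_singleton.mp hs)
  obtain ⟨Q, hQ, hρfQ, hQdisj⟩ := Ideal.exists_le_prime_disjoint _ _ hdisj
  have hQp : Q.comap ρ ≤ p := Ideal.disjoint_map_primeCompl_iff_comap_le.mp hQdisj
  have hfQ : Ideal.span {f} ≤ Q.comap ρ :=
    (Ideal.span_singleton_le_iff_mem _).mpr (hρfQ (Ideal.mem_span_singleton_self _))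
  exact hp Q hQ (le_antisymm hQp (hf.2 ⟨hQ.comap ρ, hfQ⟩ hQp))

end CommRing

namespace AlgebraicGeometry.Scheme

variable {X : Scheme.{u}}

lemma exists_finset_affineOpens_iSup_eq_top [CompactSpace X] :
    ∃ s : Finset X.affineOpens, ⨆ U : s, ((U : X.affineOpens) : X.Opens) = ⊤ := by
  obtain ⟨s, hs, hcover⟩ :=
    (isCompact_iff_finite_and_eq_biUnion_affineOpens (X := X) (U := ⊤)).mp isCompact_univ
  refine ⟨hs.toFinset, ?_⟩
  rw [hcover, iSup_subtype]
  simp only [Set.Finite.mem_toFinset]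

lemma basicOpen_le_basicOpen_of_dvd_res {ι : Type*} (U : ι → X.Opens) (hU : ⨆ i, U i = ⊤)
    {f s : Γ(X, ⊤)} (h : ∀ i,
      X.presheaf.map (homOfLE le_top : U i ⟶ ⊤).op f ∣ X.presheaf.map (homOfLE le_top).op s) :
    X.basicOpen s ≤ X.basicOpen f := by
  intro x hx
  obtain ⟨i, hi⟩ := TopologicalSpace.Opens.mem_iSup.mp (hU ▸ trivial : x ∈ ⨆ i, U i)
  obtain ⟨c, hc⟩ := h i
  have hx' : x ∈ X.basicOpen (X.presheaf.map (homOfLE le_top : U i ⟶ ⊤).op s) := by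
    rw [X.basicOpen_res]
    exact ⟨hi, hx⟩
  rw [hc, X.basicOpen_mul, X.basicOpen_res] at hx'
  exact hx'.1.2

lemma exists_dvd_pow_of_basicOpen_le [CompactSpace X] [QuasiSeparatedSpace X]
    {f s : Γ(X, ⊤)} (h : X.basicOpen s ≤ X.basicOpen f) : ∃ n, f ∣ s ^ n := by
  have := isLocalization_basicOpen_of_qcqs isCompact_univ isQuasiSeparated_univ s
  rw [← IsLocalization.Away.algebraMap_isUnit_iff (x := s) (S := Γ(X, X.basicOpen s))]
  have hunit : IsUnit
      (X.presheaf.map (homOfLE h).op (X.presheaf.map (homOfLE (X.basicOpen_le f)).op f)) :=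
    (X.toRingedSpace.isUnit_res_basicOpen f).map _
  rwa [← ConcreteCategory.comp_apply, ← Functor.map_comp] at hunit

lemma toSpecΓ_base_fromSpec_base {U : X.Opens} (hU : IsAffineOpen U)
    (Q : PrimeSpectrum Γ(X, U)) :
    X.toSpecΓ.base (hU.fromSpec.base Q) =
      PrimeSpectrum.comap (X.presheaf.map (homOfLE le_top).op).hom Q := by
  change (hU.fromSpec ≫ X.toSpecΓ).base Q = _
  rw [hU.fromSpec_toSpecΓ]
  rfl

lemma finite_minimalPrimes_Γ (X : Scheme.{u}) [IsNoetherian X] :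
    (minimalPrimes Γ(X, ⊤)).Finite := by
  obtain ⟨s, hs⟩ := exists_finset_affineOpens_iSup_eq_top (X := X)
  have (U : s) : IsNoetherianRing Γ(X, U) := IsLocallyNoetherian.component_noetherian U.1
  refine minimalPrimes.finite_of_injective (B := ∀ U : s, Γ(X, U))
    (ρ := RingHom.pi fun U : s ↦ (X.presheaf.map (homOfLE le_top).op).hom) fun a b hab ↦ ?_
  exact X.sheaf.eq_of_locally_eq' _ ⊤ (fun U ↦ homOfLE le_top) hs.ge a b fun U ↦ congr_fun hab U

end AlgebraicGeometry.Scheme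

theorem stmt_9_general (X : Scheme.{u}) [IsNoetherian X]
    (p : PrimeSpectrum Γ(X, ⊤)) (hp : Order.height p ≤ 1) :
    ∃ x : X, X.toSpecΓ.base x = p := by
  by_contra! hp_range
  obtain ⟨f, hf⟩ :=
    p.exists_mem_minimalPrimes_span_singleton (Scheme.finite_minimalPrimes_Γ X) hp
  have hdvd (U : X.affineOpens) : ∃ s ∉ p.asIdeal, X.presheaf.map (homOfLE le_top).op f ∣
      X.presheaf.map (homOfLE le_top : (U : X.Opens) ⟶ ⊤).op s :=
    Ideal.exists_notMem_map_dvd_map _ hf fun Q hQ hQp ↦ hp_range _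
      ((Scheme.toSpecΓ_base_fromSpec_base U.2 ⟨Q, hQ⟩).trans (PrimeSpectrum.ext hQp))
  choose s hsp hs using hdvd
  obtain ⟨c, hc⟩ := Scheme.exists_finset_affineOpens_iSup_eq_top (X := X)
  have hcp : ∏ U ∈ c, s U ∉ p.asIdeal := p.asIdeal.primeCompl.prod_mem fun U _ ↦ hsp U
  obtain ⟨n, hn⟩ := Scheme.exists_dvd_pow_of_basicOpen_le
    (Scheme.basicOpen_le_basicOpen_of_dvd_res _ hc fun U ↦
      (hs U).trans (map_dvd _ (Finset.dvd_prod_of_mem s U.2)))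
  have hfp : f ∈ p.asIdeal := hf.le (Ideal.mem_span_singleton_self f)
  exact hcp (p.isPrime.mem_of_pow_mem n (p.asIdeal.mem_of_dvd hn hfp))

/-- For a noetherian separated scheme `X`, every prime of the ring of global sections of
height at most one is in the image of the canonical morphism `X ⟶ Spec Γ(X, ⊤)`. -/
theorem stmt_9 (X : Scheme.{u}) [IsNoetherian X] [X.IsSeparated]
    (p : PrimeSpectrum Γ(X, ⊤)) (hp : Order.height p ≤ 1) :
    ∃ x : X, X.toSpecΓ.base x = p :=
  stmt_9_general X p hp
end

section
/- Let f : X → Y be a morphism of schemes whose underlying continuous map of topological spaces is a homeomorphism. Then f is an affine morphism. -/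
open AlgebraicGeometry CategoryTheory

/-- A morphism of schemes which is a homeomorphism on underlying topological spaces is an
affine morphism. -/
theorem stmt_10 {X Y : Scheme.{u}} (f : X ⟶ Y) (hf : IsHomeomorph f.base) :
    IsAffineHom f :=
  isAffineHom_of_isInducing f hf.isInducing (hf.surjective.range_eq ▸ isClosed_univ)
end

section
/- Let A be a noetherian commutative ring that is locally factorial, i.e. the localization A_𝔭 is a unique factorization domain for every prime ideal 𝔭 of A. Let 𝔞 ⊆ A be an ideal such that every minimal prime ideal over 𝔞 has height 1 (V(𝔞) is a hypersurface). Then the open subset D(𝔞) of Spec A is affine. -/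
open AlgebraicGeometry CategoryTheory

/-!
Near a prime `q`, the minimal primes of `𝔞` contained in `q` become height-one primes of the
factorial ring `A_q`, hence principal, say `(x₁), …, (xₙ)`; a power of `x₁ ⋯ xₙ` lies in `𝔞 A_q`
and cuts out `V(𝔞)` set-theoretically near `q`. Clearing denominators gives `g ∉ q` and `a ∈ 𝔞`
with `g 𝔞 ⊆ √(a)`, so that `D(𝔞) ∩ D(g) = D(g a)` is affine. Such `g` generate the unit ideal,
and an open set whose intersections with the basic opens of a spanning family are affine is
affine.
-/

theorem Ideal.span_eq_top_of_forall_isMaximal {R : Type*} [CommSemiring R] {s : Set R}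
    (h : ∀ m : Ideal R, m.IsMaximal → ∃ x ∈ s, x ∉ m) : Ideal.span s = ⊤ := by
  by_contra hs
  obtain ⟨m, hm, hsm⟩ := Ideal.exists_le_maximal _ hs
  obtain ⟨x, hx, hxm⟩ := h m hm
  exact hxm (hsm (Ideal.subset_span hx))

theorem IsLocalization.exists_mem_forall_mul_mem_of_map_le {R S : Type*} [CommRing R]
    [CommRing S] [Algebra R S] (M : Submonoid R) [IsLocalization M S] {I J : Ideal R}
    (hI : I.FG) (h : I.map (algebraMap R S) ≤ J.map (algebraMap R S)) :
    ∃ m ∈ M, ∀ x ∈ I, m * x ∈ J := by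
  induction I, hI using Submodule.fg_induction with
  | singleton x =>
    have hx : algebraMap R S x ∈ J.map (algebraMap R S) :=
      h (Ideal.mem_map_of_mem _ (Submodule.mem_span_singleton_self x))
    obtain ⟨m, hm, hmx⟩ := (algebraMap_mem_map_algebraMap_iff M S J x).mp hx
    refine ⟨m, hm, fun y hy => ?_⟩
    obtain ⟨c, rfl⟩ := Ideal.mem_span_singleton'.mp hy
    simpa only [mul_left_comm] using J.mul_mem_left c hmx
  | sup N₁ N₂ _ _ ih₁ ih₂ =>
    rw [Ideal.map_sup, sup_le_iff] at h
    obtain ⟨m₁, hm₁, h₁⟩ := ih₁ h.1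
    obtain ⟨m₂, hm₂, h₂⟩ := ih₂ h.2
    refine ⟨m₁ * m₂, M.mul_mem hm₁ hm₂, fun y hy => ?_⟩
    obtain ⟨y₁, hy₁, y₂, hy₂, rfl⟩ := Submodule.mem_sup.mp hy
    have := J.add_mem (J.mul_mem_left m₂ (h₁ y₁ hy₁)) (J.mul_mem_left m₁ (h₂ y₂ hy₂))
    convert this using 1
    ring

theorem UniqueFactorizationMonoid.exists_mem_le_radical_span_singleton {R : Type*} [CommRing R]
    [IsDomain R] [UniqueFactorizationMonoid R] {I : Ideal R} (hfin : I.minimalPrimes.Finite)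
    (hht : ∀ p ∈ I.minimalPrimes, p.height = 1) :
    ∃ a ∈ I, I ≤ (Ideal.span {a}).radical := by
  have hprincipal : ∀ p ∈ I.minimalPrimes, ∃ x, p = Ideal.span {x} := fun p hp =>
    haveI := hp.isPrime
    (isPrincipal_of_height_eq_one (hht p hp)).principal
  choose! x hx using hprincipal
  set X := ∏ p ∈ hfin.toFinset, x p with hXdef
  have hX : X ∈ I.radical := by
    rw [← Ideal.sInf_minimalPrimes]
    refine Submodule.mem_sInf.mpr fun p hp => ?_
    obtain ⟨c, hc⟩ := Finset.dvd_prod_of_mem x (hfin.mem_toFinset.mpr hp)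
    rw [hXdef, hc]
    exact Ideal.mul_mem_right c p ((Ideal.span_singleton_le_iff_mem p).mp (hx p hp).ge)
  obtain ⟨n, hn⟩ := hX
  refine ⟨X ^ n, hn, ?_⟩
  rw [Ideal.radical_eq_sInf]
  refine le_sInf fun Q ⟨hXnQ, hQ⟩ => ?_
  have hXQ : X ∈ Q := hQ.mem_of_pow_mem n (hXnQ (Ideal.mem_span_singleton_self _))
  obtain ⟨p, hp, hxQ⟩ := (hQ.prod_mem_iff).mp hXQ
  rw [Set.Finite.mem_toFinset] at hp
  calc I ≤ p := hp.1.2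
    _ = Ideal.span {x p} := hx p hp
    _ ≤ Q := (Ideal.span_singleton_le_iff_mem _).mpr hxQ

theorem exists_notMem_forall_mul_mem_radical_span_singleton {A : Type*} [CommRing A]
    [IsNoetherianRing A] (q : Ideal A) [q.IsPrime] [IsDomain (Localization.AtPrime q)]
    [UniqueFactorizationMonoid (Localization.AtPrime q)] {𝔞 : Ideal A}
    (hht : ∀ p ∈ 𝔞.minimalPrimes, p.height = 1) :
    ∃ g ∉ q, ∃ a ∈ 𝔞, ∀ x ∈ 𝔞, g * x ∈ (Ideal.span {a}).radical := by
  set φ := algebraMap A (Localization.AtPrime q)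
  have hht' : ∀ P ∈ (𝔞.map φ).minimalPrimes, P.height = 1 := by
    intro P hP
    rw [IsLocalization.minimalPrimes_map q.primeCompl (Localization.AtPrime q)] at hP
    rw [← IsLocalization.height_under q.primeCompl P]
    exact hht _ hP
  obtain ⟨a', ha', hle⟩ := UniqueFactorizationMonoid.exists_mem_le_radical_span_singleton
    (Ideal.finite_minimalPrimes_of_isNoetherianRing _ _) hht'
  obtain ⟨⟨⟨a, ha⟩, s⟩, has⟩ :=
    (IsLocalization.mem_map_algebraMap_iff q.primeCompl (Localization.AtPrime q)).mp ha'
  have hspan : (Ideal.span {a}).map φ = Ideal.span {a'} := by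
    rw [Ideal.map_span, Set.image_singleton, ← has,
      Ideal.span_singleton_mul_right_unit (IsLocalization.map_units _ s)]
  obtain ⟨g, hg, hga⟩ := IsLocalization.exists_mem_forall_mul_mem_of_map_le q.primeCompl
    (IsNoetherian.noetherian 𝔞) (J := (Ideal.span {a}).radical)
    (by rwa [IsLocalization.map_radical q.primeCompl (Localization.AtPrime q), hspan])
  exact ⟨g, hg, a, ha, hga⟩

theorem PrimeSpectrum.compl_zeroLocus_inter_basicOpen {R : Type*} [CommSemiring R] {I : Ideal R}
    {a g : R} (ha : a ∈ I) (hg : ∀ x ∈ I, g * x ∈ (Ideal.span {a}).radical) :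
    (zeroLocus (I : Set R))ᶜ ∩ basicOpen g = basicOpen (g * a) := by
  ext p
  simp only [Set.mem_inter_iff, Set.mem_compl_iff, mem_zeroLocus, SetLike.mem_coe,
    mem_basicOpen, p.isPrime.mul_mem_iff_mem_or_mem, not_or]
  refine ⟨fun ⟨hI, hgp⟩ => ⟨hgp, fun hap => hI fun x hx => ?_⟩,
    fun ⟨hgp, hap⟩ => ⟨fun hI => hap (hI ha), hgp⟩⟩
  have hrad : (Ideal.span {a}).radical ≤ p.asIdeal :=
    p.isPrime.radical_le_iff.mpr ((Ideal.span_singleton_le_iff_mem _).mpr hap)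
  exact (p.isPrime.mem_or_mem (hrad (hg x hx))).resolve_left hgp

theorem AlgebraicGeometry.isAffineOpen_of_isAffineOpen_inf_basicOpen {X : Scheme} (U : X.Opens)
    (s : Set Γ(X, ⊤)) (hs : Ideal.span s = ⊤) (h : ∀ f ∈ s, IsAffineOpen (U ⊓ X.basicOpen f)) :
    IsAffineOpen U := by
  refine isAffineOpen_of_isAffineOpen_basicOpen U (X.presheaf.map (homOfLE le_top).op '' s)
    (by rw [← Ideal.map_span, hs, Ideal.map_top]) ?_
  rintro _ ⟨f, hf, rfl⟩
  rw [X.basicOpen_res]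
  exact h f hf

theorem AlgebraicGeometry.isAffineOpen_of_forall_inf_basicOpen_eq {R : CommRingCat}
    (U : (Spec R).Opens) (s : Set R) (hs : Ideal.span s = ⊤)
    (h : ∀ g ∈ s, ∃ f : R, U ⊓ PrimeSpectrum.basicOpen g = PrimeSpectrum.basicOpen f) :
    IsAffineOpen U := by
  refine isAffineOpen_of_isAffineOpen_inf_basicOpen U ((Scheme.ΓSpecIso R).inv '' s)
    (by rw [← Ideal.map_span, hs, Ideal.map_top]) ?_
  rintro _ ⟨g, hg, rfl⟩
  obtain ⟨f, hf⟩ := h g hg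
  rw [basicOpen_eq_of_affine, hf]
  exact IsAffineOpen.Spec_basicOpen f

/-- In a noetherian locally factorial ring, the complement of every hypersurface is
affine. -/
theorem stmt_12 {A : Type*} [CommRing A] [IsNoetherianRing A]
    (hdom : ∀ (p : Ideal A) (hp : p.IsPrime),
      haveI := hp; IsDomain (Localization.AtPrime p))
    (hfac : ∀ (p : Ideal A) (hp : p.IsPrime),
      haveI := hp; haveI := hdom p hp;
      UniqueFactorizationMonoid (Localization.AtPrime p))
    (𝔞 : Ideal A)
    (hht : ∀ (p : Ideal A) (hp : p ∈ 𝔞.minimalPrimes),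
      Order.height (⟨p, hp.1.1⟩ : PrimeSpectrum A) = 1)
    (U : (Spec (CommRingCat.of A)).Opens)
    (hU : U.1 = {p : PrimeSpectrum A | ¬ 𝔞 ≤ p.asIdeal}) :
    IsAffineOpen U := by
  have hht' : ∀ p ∈ 𝔞.minimalPrimes, p.height = 1 := fun p hp =>
    (PrimeSpectrum.height_eq_orderHeight ⟨p, hp.1.1⟩).trans (hht p hp)
  have hspan : Ideal.span {g : A | ∃ a ∈ 𝔞, ∀ x ∈ 𝔞, g * x ∈ (Ideal.span {a}).radical} = ⊤ := by
    refine Ideal.span_eq_top_of_forall_isMaximal fun m hm => ?_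
    have := hdom m hm.isPrime
    have := hfac m hm.isPrime
    obtain ⟨g, hgm, hg⟩ := exists_notMem_forall_mul_mem_radical_span_singleton m hht'
    exact ⟨g, hg, hgm⟩
  refine isAffineOpen_of_forall_inf_basicOpen_eq U _ hspan ?_
  rintro g ⟨a, ha, hga⟩
  exact ⟨g * a, SetLike.coe_injective <|
    (congrArg (· ∩ _) hU).trans (PrimeSpectrum.compl_zeroLocus_inter_basicOpen ha hga)⟩
end

section
/- Let A be a commutative ring and U ⊆ Spec A an open subset that is affine, i.e. the corresponding open subscheme is an affine scheme. Then the ring of sections Γ(U, O_{Spec A}) is an A-algebra of finite type. -/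
open AlgebraicGeometry CategoryTheory

-- The restriction map is `appLE` of the identity, which is locally of finite type.
theorem AlgebraicGeometry.IsAffineOpen.finiteType_presheaf_map {X : Scheme} {U V : X.Opens}
    (hU : IsAffineOpen U) (hV : IsAffineOpen V) (h : V ≤ U) :
    (X.presheaf.map (homOfLE h).op).hom.FiniteType := by
  have h_appLE : Scheme.Hom.appLE (𝟙 X) U V h = X.presheaf.map (homOfLE h).op :=
    Category.id_comp _
  exact h_appLE ▸ Scheme.Hom.finiteType_appLE (𝟙 X) hU hV h

/-- The ring of sections over an affine open subset of `Spec A` is an `A`-algebra of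
finite type, where the `A`-algebra structure is induced by restriction of global
sections. -/
theorem stmt_13 {A : Type u} [CommRing A]
    (U : (Spec (CommRingCat.of A)).Opens) (hU : IsAffineOpen U) :
    RingHom.FiniteType
      ((Scheme.ΓSpecIso (CommRingCat.of A)).inv ≫
        (Spec (CommRingCat.of A)).presheaf.map (homOfLE le_top).op :
          CommRingCat.of A ⟶ Γ(Spec (CommRingCat.of A), U)).hom := by
  have h_restrict := (isAffineOpen_top (Spec (CommRingCat.of A))).finiteType_presheaf_map hU le_top
  have h_iso : (Scheme.ΓSpecIso (CommRingCat.of A)).inv.hom.FiniteType :=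
    .of_surjective _ (ConcreteCategory.bijective_of_isIso _).2
  exact h_restrict.comp h_iso
end

section
/- Let A be a noetherian integral domain and 𝔞 ⊆ A an ideal such that the open subset U = D(𝔞) ⊆ Spec A is not affine but its ring of sections B = Γ(U, O_{Spec A}) is noetherian. Then the extended ideal 𝔞B (the ideal of B generated by the image of 𝔞 under the restriction map A → B) has height at least 2. -/
/-!
Suppose a prime `p` of `B = Γ(U)` containing `𝔞B` had height at most one. Since `B` is a domain,
`p` is minimal over `(t)` for any nonzero `t ∈ p`, so in the noetherian ring `B` it is an
associated prime of `B/(t)`: `p = ((t) : b)` for some `b ∉ (t)`. The images `w` of the elements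
of `𝔞` lie in `p` and their basic opens cover `U = D(𝔞)`. Writing `w b = t c`, the fractions
`c / w` on the `D(w)` glue to a section `s` on `U` with `t s = b`, a contradiction.
-/

open AlgebraicGeometry CategoryTheory

lemma Ideal.mem_minimalPrimes_span_singleton_of_height_le_one {R : Type*} [CommRing R]
    {p : Ideal R} [p.IsPrime] (hp : p.height ≤ 1) {t : R} (htp : t ∈ p)
    (ht : t ∈ nonZeroDivisors R) : p ∈ (span {t}).minimalPrimes :=
  have : p.FiniteHeight := p.finiteHeight_iff.mpr (.inr (hp.trans_lt (by decide)).ne)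
  mem_minimalPrimes_of_height_le (span_singleton_le_iff_mem p |>.mpr htp)
    (hp.trans (one_le_height_span_singleton_of_mem_nonZeroDivisors ht))

namespace AlgebraicGeometry.Scheme

variable {X : Scheme} {U : X.Opens}

lemma presheaf_map_map_apply {V W : X.Opens} (hVU : V ≤ U) (hWV : W ≤ V) (x : Γ(X, U)) :
    X.presheaf.map (homOfLE hWV).op (X.presheaf.map (homOfLE hVU).op x) =
      X.presheaf.map (homOfLE (hWV.trans hVU)).op x :=
  TopCat.Presheaf.restrict_restrict hWV hVU x

lemma isUnit_map_of_le_basicOpen {f : Γ(X, U)} {W : X.Opens} (hW : W ≤ X.basicOpen f) :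
    IsUnit (X.presheaf.map (homOfLE (hW.trans (X.basicOpen_le f))).op f) := by
  have hf : IsUnit (X.presheaf.map (homOfLE (X.basicOpen_le f)).op f) :=
    X.toRingedSpace.isUnit_res_basicOpen f
  rw [← presheaf_map_map_apply (X.basicOpen_le f) hW]
  exact hf.map (X.presheaf.map (homOfLE hW).op).hom

variable {ι : Type*} {w : ι → Γ(X, U)}

lemma eq_of_forall_mul_eq (hU : U ≤ ⨆ i, X.basicOpen (w i)) {x y : Γ(X, U)}
    (h : ∀ i, w i * x = w i * y) : x = y := by
  refine X.sheaf.eq_of_locally_eq' _ U (fun i ↦ homOfLE (X.basicOpen_le (w i))) hU x y fun i ↦ ?_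
  have hw : IsUnit (X.presheaf.map (homOfLE (X.basicOpen_le (w i))).op (w i)) :=
    X.toRingedSpace.isUnit_res_basicOpen (w i)
  show X.presheaf.map (homOfLE (X.basicOpen_le (w i))).op x =
    X.presheaf.map (homOfLE (X.basicOpen_le (w i))).op y
  apply hw.mul_left_cancel
  rw [← map_mul, ← map_mul, h i]

lemma exists_forall_mul_eq (hU : U ≤ ⨆ i, X.basicOpen (w i)) (c : ι → Γ(X, U))
    (hc : ∀ i j, w i * c j = w j * c i) : ∃ s, ∀ i, w i * s = c i := by
  have hu (i) : IsUnit (X.presheaf.map (homOfLE (X.basicOpen_le (w i))).op (w i)) :=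
    X.toRingedSpace.isUnit_res_basicOpen (w i)
  obtain ⟨sf, hsf⟩ : ∃ sf : ∀ i, Γ(X, X.basicOpen (w i)), ∀ i,
      X.presheaf.map (homOfLE (X.basicOpen_le (w i))).op (w i) * sf i =
        X.presheaf.map (homOfLE (X.basicOpen_le (w i))).op (c i) :=
    ⟨fun i ↦ ↑(hu i).unit⁻¹ * _, fun i ↦ Units.mul_inv_cancel_left (hu i).unit _⟩
  have hsf_res (i) {W : X.Opens} (hW : W ≤ X.basicOpen (w i)) :
      X.presheaf.map (homOfLE (hW.trans (X.basicOpen_le (w i)))).op (w i) *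
          X.presheaf.map (homOfLE hW).op (sf i) =
        X.presheaf.map (homOfLE (hW.trans (X.basicOpen_le (w i)))).op (c i) := by
    rw [← presheaf_map_map_apply (X.basicOpen_le (w i)) hW (w i),
      ← presheaf_map_map_apply (X.basicOpen_le (w i)) hW (c i), ← map_mul, hsf i]
  have hcompat : TopCat.Presheaf.IsCompatible X.sheaf.obj _ sf := by
    intro i j
    have hW : X.basicOpen (w i) ⊓ X.basicOpen (w j) ≤ X.basicOpen (w i * w j) := by
      rw [basicOpen_mul]
    apply (isUnit_map_of_le_basicOpen hW).mul_left_cancel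
    show _ * X.presheaf.map (homOfLE inf_le_left).op (sf i) =
      _ * X.presheaf.map (homOfLE inf_le_right).op (sf j)
    rw [map_mul, mul_right_comm, hsf_res i, mul_assoc, hsf_res j, ← map_mul, ← map_mul,
      mul_comm (c i), hc]
  obtain ⟨s, hs, -⟩ : ∃! s : Γ(X, U),
      ∀ i, X.presheaf.map (homOfLE (X.basicOpen_le (w i))).op s = sf i :=
    X.sheaf.existsUnique_gluing' _ U (fun i ↦ homOfLE (X.basicOpen_le (w i))) hU sf hcompat
  refine ⟨s, fun i ↦ X.sheaf.eq_of_locally_eq' _ U (fun j ↦ homOfLE (X.basicOpen_le (w j))) hU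
    _ _ fun j ↦ ?_⟩
  show X.presheaf.map _ _ = X.presheaf.map _ _
  apply (hu j).mul_left_cancel
  rw [map_mul, hs j, mul_left_comm, hsf j, ← map_mul, ← map_mul, hc]

lemma dvd_of_forall_dvd_mul (hU : U ≤ ⨆ i, X.basicOpen (w i)) {t b : Γ(X, U)}
    (ht : t ∈ nonZeroDivisors Γ(X, U)) (h : ∀ i, t ∣ w i * b) : t ∣ b := by
  choose c hc using h
  obtain ⟨s, hs⟩ := exists_forall_mul_eq hU c fun i j ↦
    (mul_cancel_left_mem_nonZeroDivisors ht).mp (by linear_combination w j * hc i - w i * hc j)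
  exact ⟨s, eq_of_forall_mul_eq hU fun i ↦ by linear_combination hc i - t * hs i⟩

lemma not_le_iSup_basicOpen_of_mem_minimalPrimes [IsNoetherianRing Γ(X, U)] {p : Ideal Γ(X, U)}
    {t : Γ(X, U)} (ht : t ∈ nonZeroDivisors Γ(X, U)) (hp : p ∈ (Ideal.span {t}).minimalPrimes)
    (hw : ∀ i, w i ∈ p) : ¬ U ≤ ⨆ i, X.basicOpen (w i) := by
  intro hU
  obtain ⟨b, rfl⟩ := Submodule.exists_eq_colon_of_mem_minimalPrimes (x := (1 : Γ(X, U)))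
    (by rwa [show (Ideal.span {t}).colon {1} = Ideal.span {t} by ext; simp])
  refine hp.1.1.ne_top ((Ideal.eq_top_iff_one _).mpr ?_)
  have hb : t ∣ b := dvd_of_forall_dvd_mul hU ht fun i ↦
    Ideal.mem_span_singleton.mp (Submodule.mem_colon_singleton.mp (hw i))
  simpa [Submodule.mem_colon_singleton, Ideal.mem_span_singleton] using hb

lemma two_le_height_of_le_iSup_basicOpen [IsIntegral X] [IsNoetherianRing Γ(X, U)]
    (p : PrimeSpectrum Γ(X, U)) (hw : ∀ i, w i ∈ p.asIdeal) (hU : U ≤ ⨆ i, X.basicOpen (w i)) :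
    2 ≤ Order.height p := by
  have hU0 : U ≠ ⊥ := by
    rintro rfl
    exact p.isPrime.ne_top (Subsingleton.elim _ _)
  obtain ⟨x, hx⟩ := (TopologicalSpace.Opens.ne_bot_iff_nonempty U).mp hU0
  have : Nonempty U := ⟨⟨x, hx⟩⟩
  obtain ⟨i, hi⟩ := TopologicalSpace.Opens.mem_iSup.mp (hU hx)
  have hwi : w i ∈ nonZeroDivisors Γ(X, U) := mem_nonZeroDivisors_of_ne_zero fun h ↦ by
    rw [h, basicOpen_zero] at hi
    exact hi
  by_contra! h
  have hp : p.asIdeal.height ≤ 1 := by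
    rw [p.height_eq_orderHeight]
    exact Order.le_of_lt_add_one h
  exact not_le_iSup_basicOpen_of_mem_minimalPrimes hwi
    (Ideal.mem_minimalPrimes_span_singleton_of_height_le_one hp (hw i) hwi) hw hU

end AlgebraicGeometry.Scheme

lemma AlgebraicGeometry.le_iSup_basicOpen_of_subset_compl_zeroLocus {R : Type*} [CommRing R]
    (𝔞 : Ideal R) (U : (Spec (CommRingCat.of R)).Opens)
    (hU : U.1 ⊆ (PrimeSpectrum.zeroLocus (𝔞 : Set R))ᶜ) :
    U ≤ ⨆ g : 𝔞, (Spec (CommRingCat.of R)).basicOpen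
      (((Scheme.ΓSpecIso (CommRingCat.of R)).inv ≫
        (Spec (CommRingCat.of R)).presheaf.map (homOfLE (le_top : U ≤ ⊤)).op).hom g) := by
  intro x hx
  obtain ⟨g, hg𝔞, hgx⟩ := Set.not_subset.mp (hU hx)
  refine TopologicalSpace.Opens.mem_iSup.mpr ⟨⟨g, hg𝔞⟩, ?_⟩
  rw [CommRingCat.hom_comp, RingHom.comp_apply, Scheme.basicOpen_res, basicOpen_eq_of_affine]
  exact ⟨hx, hgx⟩

theorem stmt_14_general {A : Type u} [CommRing A] [IsDomain A]
    (𝔞 : Ideal A) (U : (Spec (CommRingCat.of A)).Opens)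
    (hU : U.1 = {p : PrimeSpectrum A | ¬ 𝔞 ≤ p.asIdeal})
    (hnoeth : IsNoetherianRing Γ(Spec (CommRingCat.of A), U)) :
    ∀ (p : Ideal Γ(Spec (CommRingCat.of A), U))
      (hp : p ∈ (𝔞.map
        (((Scheme.ΓSpecIso (CommRingCat.of A)).inv ≫
          (Spec (CommRingCat.of A)).presheaf.map (homOfLE le_top).op).hom :
            A →+* Γ(Spec (CommRingCat.of A), U))).minimalPrimes),
      2 ≤ Order.height (⟨p, hp.1.1⟩ : PrimeSpectrum Γ(Spec (CommRingCat.of A), U)) := by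
  intro p hp
  have : IsDomain (CommRingCat.of A) := ‹IsDomain A›
  exact Scheme.two_le_height_of_le_iSup_basicOpen ⟨p, hp.1.1⟩
    (fun g : 𝔞 ↦ hp.1.2 (Ideal.mem_map_of_mem _ g.2))
    (le_iSup_basicOpen_of_subset_compl_zeroLocus 𝔞 U hU.le)

/-- If `U = D(𝔞)` is a non-affine open subset of the spectrum of a noetherian domain `A`
whose ring of sections `B` is noetherian, then every minimal prime over the extended ideal
`𝔞B` has height at least two. -/
theorem stmt_14 {A : Type u} [CommRing A] [IsDomain A] [IsNoetherianRing A]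
    (𝔞 : Ideal A) (U : (Spec (CommRingCat.of A)).Opens)
    (hU : U.1 = {p : PrimeSpectrum A | ¬ 𝔞 ≤ p.asIdeal})
    (hnaff : ¬ IsAffineOpen U)
    (hnoeth : IsNoetherianRing Γ(Spec (CommRingCat.of A), U)) :
    ∀ (p : Ideal Γ(Spec (CommRingCat.of A), U))
      (hp : p ∈ (𝔞.map
        (((Scheme.ΓSpecIso (CommRingCat.of A)).inv ≫
          (Spec (CommRingCat.of A)).presheaf.map (homOfLE le_top).op).hom :
            A →+* Γ(Spec (CommRingCat.of A), U))).minimalPrimes),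
      2 ≤ Order.height (⟨p, hp.1.1⟩ : PrimeSpectrum Γ(Spec (CommRingCat.of A), U)) :=
  stmt_14_general 𝔞 U hU hnoeth
end

section
/- Let A be an integral domain with fraction field K, let q ∈ K, and let a ∈ A. Define the denominator ideal N(q) = {f ∈ A : q·f ∈ A} and the numerator ideal Z(q) = q·N(q) = {g ∈ A : g = q·f for some f ∈ N(q)} (both are ideals of A, where A is identified with its image in K). Then the radical of N(q) + Z(q) equals the radical of N(q + a) + Z(q + a). -/
/-! Since `(q + a)·f = q·f + a·f` with `a·f ∈ A`, the denominator ideal is unchanged by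
`q ↦ q + a` and `Z(q + a) ⊆ N(q) + Z(q)`; applying this also to `q + a` and `-a` shows that
already the ideals `N(q) + Z(q)` and `N(q + a) + Z(q + a)` coincide. -/

open scoped nonZeroDivisors

/-- The denominator ideal `N(q) = {f ∈ A : q·f ∈ A}` of an element `q` of the fraction
field of a domain `A`. -/
def denomIdeal (A : Type u) [CommRing A] [IsDomain A] (q : FractionRing A) : Ideal A where
  carrier := {f | ∃ g : A,
    algebraMap A (FractionRing A) g = q * algebraMap A (FractionRing A) f}
  zero_mem' := ⟨0, by simp⟩
  add_mem' := by
    rintro x y ⟨gx, hgx⟩ ⟨gy, hgy⟩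
    exact ⟨gx + gy, by rw [map_add, map_add, hgx, hgy, mul_add]⟩
  smul_mem' := by
    rintro c x ⟨g, hg⟩
    refine ⟨c * g, ?_⟩
    rw [smul_eq_mul, map_mul, map_mul, hg]
    ring

/-- The numerator ideal `Z(q) = q·N(q)` of an element `q` of the fraction field of a
domain `A`. -/
def numerIdeal (A : Type u) [CommRing A] [IsDomain A] (q : FractionRing A) : Ideal A where
  carrier := {g | ∃ f : A,
    algebraMap A (FractionRing A) g = q * algebraMap A (FractionRing A) f}
  zero_mem' := ⟨0, by simp⟩
  add_mem' := by
    rintro x y ⟨fx, hfx⟩ ⟨fy, hfy⟩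
    exact ⟨fx + fy, by rw [map_add, map_add, hfx, hfy, mul_add]⟩
  smul_mem' := by
    rintro c g ⟨f, hf⟩
    refine ⟨c * f, ?_⟩
    rw [smul_eq_mul, map_mul, map_mul, hf]
    ring

section

variable {A : Type u} [CommRing A] [IsDomain A]

lemma denomIdeal_add_algebraMap (q : FractionRing A) (a : A) :
    denomIdeal A (q + algebraMap A (FractionRing A) a) = denomIdeal A q := by
  ext f
  constructor
  · rintro ⟨g, hg⟩
    exact ⟨g - a * f, by rw [map_sub, map_mul, hg]; ring⟩
  · rintro ⟨g, hg⟩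
    exact ⟨g + a * f, by rw [map_add, map_mul, hg]; ring⟩

lemma numerIdeal_add_algebraMap_le (q : FractionRing A) (a : A) :
    numerIdeal A (q + algebraMap A (FractionRing A) a) ≤ denomIdeal A q + numerIdeal A q := by
  rintro g ⟨f, hf⟩
  have hqf : algebraMap A (FractionRing A) (g - a * f) = q * algebraMap A (FractionRing A) f := by
    rw [map_sub, map_mul, hf]
    ring
  have hf_denom : f ∈ denomIdeal A q := ⟨g - a * f, hqf⟩
  exact Submodule.mem_sup.2
    ⟨a * f, Ideal.mul_mem_left _ a hf_denom, g - a * f, ⟨f, hqf⟩, add_sub_cancel _ _⟩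

lemma denomIdeal_add_numerIdeal_add_algebraMap (q : FractionRing A) (a : A) :
    denomIdeal A (q + algebraMap A (FractionRing A) a) +
        numerIdeal A (q + algebraMap A (FractionRing A) a) =
      denomIdeal A q + numerIdeal A q := by
  rw [denomIdeal_add_algebraMap]
  refine le_antisymm (sup_le le_sup_left (numerIdeal_add_algebraMap_le q a)) ?_
  have h := numerIdeal_add_algebraMap_le (q + algebraMap A (FractionRing A) a) (-a)
  rw [map_neg, add_neg_cancel_right, denomIdeal_add_algebraMap] at h
  exact sup_le le_sup_left h

end

/-- The radical of the sum of the denominator and numerator ideals of a rational function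
`q` is invariant under adding a global (integral) element `a ∈ A` to `q`. -/
theorem stmt_16 {A : Type u} [CommRing A] [IsDomain A] (q : FractionRing A) (a : A) :
    (denomIdeal A q + numerIdeal A q).radical =
      (denomIdeal A (q + algebraMap A (FractionRing A) a) +
        numerIdeal A (q + algebraMap A (FractionRing A) a)).radical := by
  rw [denomIdeal_add_numerIdeal_add_algebraMap]
end

section
/- Let X be a scheme that is quasi-compact and quasi-separated and whose underlying topological space has Krull dimension at most 0 (every point is its own closure among specializations, i.e. the space is zero-dimensional in the sense that there are no nontrivial specializations). Then X is an affine scheme. -/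
/-!
Zero-dimensionality makes `X` a T1 space. A quasi-compact open of a quasi-separated space is
constructible, and on an affine open a constructible set stable under specialization is closed,
so every quasi-compact open of `X` is clopen. Enlarging an affine open `U` by an affine open `V`
then adds the piece `V \ U`, which is clopen in `V`, hence cut out by an idempotent and affine;
as a disjoint union of two affines, `U ⊔ V` is affine. Induction over a finite affine cover of `X`
shows that `X` itself is affine.
-/

open AlgebraicGeometry CategoryTheory Topology

universe u

theorem t1Space_of_topologicalKrullDim_le_zero {X : Type*} [TopologicalSpace X] [T0Space X]
    (h : topologicalKrullDim X ≤ 0) : T1Space X := by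
  refine t1Space_iff_specializes_imp_eq.mpr fun x y hxy ↦ ?_
  let closureSingleton (z : X) : TopologicalSpace.IrreducibleCloseds X :=
    ⟨closure {z}, isIrreducible_singleton.closure, isClosed_closure⟩
  have hyx : closureSingleton x ≤ closureSingleton y :=
    Order.krullDim_nonpos_iff_forall_isMax.mp h (closureSingleton y)
      (specializes_iff_closure_subset.mp hxy)
  exact (hxy.antisymm (specializes_iff_closure_subset.mpr hyx)).eq

namespace AlgebraicGeometry

lemma Scheme.isClosed_of_stableUnderSpecialization_of_isConstructible {X : Scheme.{u}}
    {s : Set X} (hs : StableUnderSpecialization s) (hs' : IsConstructible s) : IsClosed s := by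
  rw [TopologicalSpace.IsOpenCover.isClosed_iff_coe_preimage (iSup_affineOpens_eq_top X)]
  intro U
  let e : U.1 ≃ₜ PrimeSpectrum Γ(X, U.1) := U.2.isoSpec.hom.homeomorph
  have hU : IsOpenEmbedding (Subtype.val ∘ e.symm : PrimeSpectrum Γ(X, U.1) → X) :=
    U.1.isOpenEmbedding'.comp e.symm.isOpenEmbedding
  have : IsClosed ((Subtype.val ∘ e.symm) ⁻¹' s) :=
    PrimeSpectrum.isClosed_of_stableUnderSpecialization_of_isConstructible
      (hs.preimage hU.continuous) (hs'.preimage_of_isOpenEmbedding hU)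
  exact e.symm.isClosed_preimage.mp this

lemma Scheme.isClosed_of_isCompact_of_t1Space {X : Scheme.{u}} [QuasiSeparatedSpace X]
    [T1Space X] {U : X.Opens} (hU : IsCompact (U : Set X)) : IsClosed (U : Set X) :=
  isClosed_of_stableUnderSpecialization_of_isConstructible (fun _ _ h hx ↦ h.eq ▸ hx)
    (hU.isConstructible U.2)

lemma IsAffineOpen.of_isClosed_of_le {X : Scheme.{u}} {U V : X.Opens} (hU : IsAffineOpen U)
    (hVU : V ≤ U) (hV : IsClosed (V : Set X)) : IsAffineOpen V := by
  obtain ⟨e, -, he⟩ := PrimeSpectrum.exists_idempotent_basicOpen_eq_of_isClopen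
    (s := hU.fromSpec ⁻¹' V) ⟨hV.preimage hU.fromSpec.continuous, (hU.fromSpec ⁻¹ᵁ V).2⟩
  have hVe : V = X.basicOpen e := by
    rw [← hU.fromSpec_image_basicOpen]
    ext1
    exact (Set.image_preimage_eq_of_subset (hU.range_fromSpec ▸ hVU)).symm.trans
      (congrArg (hU.fromSpec '' ·) he)
  exact hVe ▸ hU.basicOpen e

lemma IsAffineOpen.sup_of_isClosed {X : Scheme.{u}} {U V : X.Opens} (hU : IsAffineOpen U)
    (hV : IsAffineOpen V) (hUc : IsClosed (U : Set X)) (hVc : IsClosed (V : Set X)) :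
    IsAffineOpen (U ⊔ V) := by
  let W : X.Opens := ⟨V \ U, V.2.sdiff hUc⟩
  have hW : IsAffineOpen W := hV.of_isClosed_of_le Set.sdiff_subset (hVc.sdiff U.2)
  have hUW : Disjoint U W := by
    rw [← TopologicalSpace.Opens.coe_disjoint]
    exact Set.disjoint_sdiff_right
  have hsup : U ⊔ W = U ⊔ V := by
    ext1
    exact Set.union_sdiff_self
  exact hsup ▸ hU.sup_of_disjoint hW hUW

lemma Scheme.isAffineOpen_of_isCompact_of_t1Space {X : Scheme.{u}} [QuasiSeparatedSpace X]
    [T1Space X] {U : X.Opens} (hU : IsCompact (U : Set X)) : IsAffineOpen U :=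
  compact_open_induction_on U hU (isAffineOpen_bot X) fun _ hS V hSaff ↦
    hSaff.sup_of_isClosed V.2 (isClosed_of_isCompact_of_t1Space hS)
      (isClosed_of_isCompact_of_t1Space V.2.isCompact)

end AlgebraicGeometry

/-- A quasi-compact, quasi-separated scheme whose underlying space is zero-dimensional is
affine. -/
theorem stmt_17 (X : Scheme.{u}) [CompactSpace X] [QuasiSeparatedSpace X]
    (hdim : topologicalKrullDim X ≤ 0) : IsAffine X := by
  have : T1Space X := t1Space_of_topologicalKrullDim_le_zero hdim
  have : IsAffine (⊤ : X.Opens).toScheme :=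
    Scheme.isAffineOpen_of_isCompact_of_t1Space (U := ⊤) isCompact_univ
  exact .of_isIso X.topIso.inv
end

section
/- Let A be a commutative ring and 𝔞 ⊆ A a finitely generated ideal, so that the open subset U = D(𝔞) ⊆ Spec A is quasi-compact. Let B = Γ(U, O_{Spec A}) be its ring of sections and ρ : A → B the restriction map. Then U is affine if and only if the extended ideal 𝔞B generated by ρ(𝔞) is the unit ideal of B. -/
/-!
`D(𝔞)` is the union of the affine basic opens `D(f)`, `f ∈ 𝔞`, and inside `U = D(𝔞)` each `D(f)` is
the basic open of the section `ρ f`. An open covered by affine basic opens of sections `sᵢ ∈ Γ(U)`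
is affine iff the `sᵢ` generate the unit ideal of `Γ(U)`: on an affine `U = Spec Γ(U)` the
`D(sᵢ)` cover exactly when `(sᵢ) = (1)`, and conversely affineness is local for such a cover
(Stacks 01QF).
-/

open AlgebraicGeometry CategoryTheory

namespace AlgebraicGeometry

lemma isAffineOpen_iff_span_eq_top_of_iSup_basicOpen_eq {X : Scheme} {U : X.Opens} {ι : Type*}
    (f : ι → Γ(X, U)) (hf : ⨆ i, X.basicOpen (f i) = U)
    (hf_affine : ∀ i, IsAffineOpen (X.basicOpen (f i))) :
    IsAffineOpen U ↔ Ideal.span (Set.range f) = ⊤ := by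
  refine ⟨fun hU => hU.iSup_basicOpen_eq_self_iff.mp ?_, fun h =>
    isAffineOpen_of_isAffineOpen_basicOpen U _ h (Set.forall_mem_range.mpr hf_affine)⟩
  rwa [iSup_range' (fun g => X.basicOpen g)]

lemma Spec_basicOpen_ΓSpecIso_inv_res {R : CommRingCat} (U : (Spec R).Opens) (f : R) :
    (Spec R).basicOpen
        (((Scheme.ΓSpecIso R).inv ≫ (Spec R).presheaf.map (homOfLE le_top : U ⟶ ⊤).op).hom f) =
      U ⊓ PrimeSpectrum.basicOpen f := by
  rw [CommRingCat.comp_apply, Scheme.basicOpen_res, basicOpen_eq_of_affine]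

end AlgebraicGeometry

lemma PrimeSpectrum.coe_iSup_basicOpen_ideal {A : Type*} [CommRing A] (𝔞 : Ideal A) :
    ((⨆ f : 𝔞, PrimeSpectrum.basicOpen (f : A) : TopologicalSpace.Opens (PrimeSpectrum A)) :
      Set (PrimeSpectrum A)) = {p | ¬ 𝔞 ≤ p.asIdeal} := by
  ext p
  simp [SetLike.le_def]

theorem stmt_18_general {A : Type u} [CommRing A] (𝔞 : Ideal A)
    (U : (Spec (CommRingCat.of A)).Opens)
    (hU : U.1 = {p : PrimeSpectrum A | ¬ 𝔞 ≤ p.asIdeal}) :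
    IsAffineOpen U ↔
      𝔞.map (CommRingCat.Hom.hom ((Scheme.ΓSpecIso (CommRingCat.of A)).inv ≫
        (Spec (CommRingCat.of A)).presheaf.map (homOfLE le_top).op) :
          A →+* Γ(Spec (CommRingCat.of A), U)) = ⊤ := by
  set ρ : A →+* Γ(Spec (CommRingCat.of A), U) :=
    CommRingCat.Hom.hom ((Scheme.ΓSpecIso (CommRingCat.of A)).inv ≫
      (Spec (CommRingCat.of A)).presheaf.map (homOfLE le_top).op)
  have hU_iSup : ⨆ f : 𝔞, (PrimeSpectrum.basicOpen (f : A) : (Spec (CommRingCat.of A)).Opens) = U :=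
    SetLike.coe_injective ((PrimeSpectrum.coe_iSup_basicOpen_ideal 𝔞).trans hU.symm)
  have hbasicOpen (f : 𝔞) : (Spec _).basicOpen (ρ f) = PrimeSpectrum.basicOpen (f : A) :=
    (Spec_basicOpen_ΓSpecIso_inv_res U (f : A)).trans
      (inf_eq_right.mpr (hU_iSup ▸ le_iSup (fun g : 𝔞 => PrimeSpectrum.basicOpen (g : A)) f))
  rw [Ideal.map, Set.image_eq_range]
  refine isAffineOpen_iff_span_eq_top_of_iSup_basicOpen_eq _ ?_ fun f =>
    hbasicOpen f ▸ IsAffineOpen.Spec_basicOpen (R := CommRingCat.of A) (f : A)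
  exact (iSup_congr hbasicOpen).trans hU_iSup

/-- For a finitely generated ideal `𝔞` of a commutative ring `A`, the (quasi-compact) open
set `U = D(𝔞)` is affine if and only if `𝔞` generates the unit ideal in the ring of
sections `Γ(U, 𝒪)`. -/
theorem stmt_18 {A : Type u} [CommRing A] (𝔞 : Ideal A) (hfg : 𝔞.FG)
    (U : (Spec (CommRingCat.of A)).Opens)
    (hU : U.1 = {p : PrimeSpectrum A | ¬ 𝔞 ≤ p.asIdeal}) :
    IsAffineOpen U ↔
      𝔞.map (CommRingCat.Hom.hom ((Scheme.ΓSpecIso (CommRingCat.of A)).inv ≫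
        (Spec (CommRingCat.of A)).presheaf.map (homOfLE le_top).op) :
          A →+* Γ(Spec (CommRingCat.of A), U)) = ⊤ :=
  stmt_18_general 𝔞 U hU
end

section
/- Let X be a separated scheme and U ⊆ X an open subscheme that is semiaffine, i.e. there exist a commutative ring A and a proper morphism U → Spec A. Then the open immersion U → X is an affine morphism. -/
/-!
The graph `(ι, p) : U ⟶ X × Spec A` of an immersion `ι` and a universally closed `p` is an
immersion which is universally closed (as `p` is and the projection to `Spec A` is separated),
hence a closed immersion. So `ι` factors as a closed immersion followed by the projection
`X × Spec A ⟶ X`, a base change of the affine morphism `Spec A ⟶ Spec ℤ`.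
-/

open AlgebraicGeometry CategoryTheory Limits

instance {X Y : Scheme} [X.IsSeparated] : IsSeparated (prod.snd : X ⨯ Y ⟶ Y) :=
  MorphismProperty.of_isPullback (IsPullback.of_hasBinaryProduct' X Y) inferInstance

instance {X Y : Scheme} [IsAffine Y] : IsAffineHom (prod.fst : X ⨯ Y ⟶ X) :=
  have := isAffineHom_isStableUnderBaseChange
  MorphismProperty.of_isPullback (IsPullback.of_hasBinaryProduct' X Y).flip inferInstance

lemma isClosedImmersion_prodLift {U X Y : Scheme} [X.IsSeparated] (f : U ⟶ X) (p : U ⟶ Y)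
    [IsImmersion f] [UniversallyClosed p] : IsClosedImmersion (prod.lift f p) := by
  have : IsImmersion (prod.lift f p ≫ prod.fst) := by rwa [prod.lift_fst]
  have : IsImmersion (prod.lift f p) := .of_comp _ prod.fst
  have : UniversallyClosed (prod.lift f p ≫ prod.snd) := by rwa [prod.lift_snd]
  have : UniversallyClosed (prod.lift f p) := .of_comp_of_isSeparated _ (prod.snd : X ⨯ Y ⟶ Y)
  exact .of_isPreimmersion _ (prod.lift f p).isClosedMap.isClosed_range

lemma isAffineHom_of_isImmersion_of_universallyClosed {U X Y : Scheme} [X.IsSeparated]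
    [IsAffine Y] (f : U ⟶ X) (p : U ⟶ Y) [IsImmersion f] [UniversallyClosed p] :
    IsAffineHom f := by
  have := isClosedImmersion_prodLift f p
  rw [← prod.lift_fst f p]
  infer_instance

/-- A semiaffine open subscheme of a separated scheme is affinely embedded: if `U` admits a
proper morphism to an affine scheme, then the open immersion `U ⟶ X` is an affine
morphism. -/
theorem stmt_19 (X : Scheme.{u}) [X.IsSeparated] (U : X.Opens)
    (hsemi : ∃ (A : CommRingCat.{u}) (f : (U : Scheme.{u}) ⟶ Spec A), IsProper f) :
    IsAffineHom U.ι := by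
  obtain ⟨A, p, _⟩ := hsemi
  exact isAffineHom_of_isImmersion_of_universallyClosed U.ι p
end
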